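/- Let A be a Poisson algebra with Rota–Baxter operator R of weight λ, and define x∘y = R(x)y, x⊙y = λxy, x*y = [R(x),y], x⋆y = λ[x,y]. Then the bilinear operation x•y := x∘y + y∘x + x⊙y satisfies R(x•y) = R(x)R(y), and the operation x♦y := x*y - y*x + x⋆y satisfies R(x♦y) = [R(x),R(y)]; in particular (A,•) is commutative associative, (A,♦) is a Lie algebra, and ♦ is a biderivation with respect to • (Leibniz identity), i.e. (A,•,♦) is a Poisson algebra. -/
import Mathlib


variable {F : Type*} [Field F] {A : Type*} [AddCommGroup A] [Module F A]

/-- The doubled commutative operation `x•y = R(x)y + xR(y) + λxy`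
(i.e. `x∘y + y∘x + x⊙y` for `x∘y = R(x)y`, `x⊙y = λxy`). -/
def bullet (mul : A →ₗ[F] A →ₗ[F] A) (R : A →ₗ[F] A) (lam : F) (x y : A) : A :=
  mul (R x) y + mul x (R y) + lam • mul x y

/-- The doubled bracket `x♦y = [R(x),y] + [x,R(y)] + λ[x,y]`
(i.e. `x*y - y*x + x⋆y` for `x*y = [R(x),y]`, `x⋆y = λ[x,y]`). -/
def diamond (lie : A →ₗ[F] A →ₗ[F] A) (R : A →ₗ[F] A) (lam : F) (x y : A) : A :=
  lie (R x) y + lie x (R y) + lam • lie x y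

/-- for a Poisson Rota–Baxter algebra of weight `λ`, the doubled
operations `•` and `♦` satisfy `R(x•y) = R(x)R(y)` and `R(x♦y) = [R(x),R(y)]`,
and `(A,•,♦)` is a Poisson algebra. -/
theorem stmt_19 (mul lie : A →ₗ[F] A →ₗ[F] A)
    (hcomm : ∀ a b : A, mul a b = mul b a)
    (hassoc : ∀ a b c : A, mul (mul a b) c = mul a (mul b c))
    (hanti : ∀ a b : A, lie a b = - lie b a)
    (hjac : ∀ a b c : A, lie (lie a b) c + lie (lie b c) a + lie (lie c a) b = 0)
    (hleib : ∀ a b c : A, lie a (mul b c) = mul (lie a b) c + mul b (lie a c))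
    (R : A →ₗ[F] A) (lam : F)
    (hRBmul : ∀ x y : A, mul (R x) (R y) = R (mul (R x) y + mul x (R y) + lam • mul x y))
    (hRBlie : ∀ x y : A, lie (R x) (R y) = R (lie (R x) y + lie x (R y) + lam • lie x y)) :
    (∀ x y : A, R (bullet mul R lam x y) = mul (R x) (R y)) ∧
    (∀ x y : A, R (diamond lie R lam x y) = lie (R x) (R y)) ∧
    (∀ x y : A, bullet mul R lam x y = bullet mul R lam y x) ∧
    (∀ x y z : A, bullet mul R lam (bullet mul R lam x y) z
        = bullet mul R lam x (bullet mul R lam y z)) ∧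
    (∀ x y : A, diamond lie R lam x y = - diamond lie R lam y x) ∧
    (∀ x y z : A, diamond lie R lam (diamond lie R lam x y) z
        + diamond lie R lam (diamond lie R lam y z) x
        + diamond lie R lam (diamond lie R lam z x) y = 0) ∧
    (∀ x y z : A, diamond lie R lam x (bullet mul R lam y z)
        = bullet mul R lam (diamond lie R lam x y) z
          + bullet mul R lam y (diamond lie R lam x z)) := by
  have hR : ∀ x y : A, R (bullet mul R lam x y) = mul (R x) (R y) := by
    intro x y; rw [bullet, hRBmul]
  have hL : ∀ x y : A, R (diamond lie R lam x y) = lie (R x) (R y) := by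
    intro x y; rw [diamond, hRBlie]
  refine ⟨hR, hL, ?_, ?_, ?_, ?_, ?_⟩
  · intro x y
    simp only [bullet]
    rw [hcomm (R x) y, hcomm x (R y), hcomm x y]
    module
  · intro x y z
    simp only [bullet] at hR ⊢
    rw [hR x y, hR y z]
    simp only [map_add, map_smul, LinearMap.add_apply, LinearMap.smul_apply, hassoc]
    module
  · intro x y
    simp only [diamond]
    rw [hanti (R x) y, hanti x (R y), hanti x y]
    module
  · intro x y z
    simp only [diamond] at hL ⊢
    rw [hL x y, hL y z, hL z x]
    simp only [map_add, map_smul, LinearMap.add_apply, LinearMap.smul_apply]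
    linear_combination (norm := module) hjac (R x) (R y) z + hjac (R x) y (R z)
      + hjac x (R y) (R z) + lam • hjac (R x) y z + lam • hjac x (R y) z
      + lam • hjac x y (R z) + (lam * lam) • hjac x y z
  · intro x y z
    simp only [diamond, bullet] at hR hL ⊢
    rw [hR y z, hL x y, hL x z]
    simp only [map_add, map_smul, LinearMap.add_apply, LinearMap.smul_apply, hleib]
    module
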